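/- arXiv:1908.09043 — 4 statements merged into one kernel-verified Lean document; each statement's English description precedes it below -/
import Mathlib

section
/- Let f be m-strongly convex with L-Lipschitz gradient and let μ > 0. Then the forward map x ↦ x − μ∇f(x) is Lipschitz with constant σ = max(|1 − μ m|, |1 − μ L|); i.e., ‖(x − μ∇f(x)) − (x̂ − μ∇f(x̂))‖ ≤ σ‖x − x̂‖ for all x, x̂. -/
/-!
Write `u = x - y` and `d = ∇f x - ∇f y`. Since `f - (m/2)‖·‖²` is convex with `(L - m)`-Lipschitz
gradient, its gradient is `1/(L - m)`-cocoercive (Baillon–Haddad), which unfolds to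
`‖d‖² + m L ‖u‖² ≤ (m + L) ⟪d, u⟫`. This forces `m ‖u‖ ≤ ‖d‖ ≤ L ‖u‖`, and bounding `⟪d, u⟫` from
below in `‖u - μ d‖² = ‖u‖² - 2μ ⟪d, u⟫ + μ² ‖d‖²` leaves an expression affine in `‖d‖²`, which
is largest at one of the two endpoints, where it equals `(1 - μ m)² ‖u‖²` or `(1 - μ L)² ‖u‖²`.
-/

open InnerProductSpace

variable {E : Type*} [NormedAddCommGroup E] [InnerProductSpace ℝ E]

section Bregman

/-- The Bregman divergence of `h`, with an arbitrary vector field `g` in place of its gradient. -/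
def bregmanDiv (h : E → ℝ) (g : E → E) (a b : E) : ℝ :=
  h b - h a - ⟪g a, b - a⟫_ℝ

variable (h : E → ℝ) (g : E → E)

lemma bregmanDiv_add_bregmanDiv_add_inner (a b z : E) :
    bregmanDiv h g a b + bregmanDiv h g b z + ⟪g b - g a, z - b⟫_ℝ = bregmanDiv h g a z := by
  have hz : z - a = (b - a) + (z - b) := by abel
  simp only [bregmanDiv, hz, inner_add_right, inner_sub_left]
  ring

lemma bregmanDiv_add_bregmanDiv_swap (a b : E) :
    bregmanDiv h g a b + bregmanDiv h g b a = ⟪g a - g b, a - b⟫_ℝ := by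
  have hba : b - a = -(a - b) := by abel
  simp only [bregmanDiv, hba, inner_neg_right, inner_sub_left]
  ring

lemma bregmanDiv_sub_half_sq_norm (m : ℝ) (a b : E) :
    bregmanDiv (fun z ↦ h z - m / 2 * ‖z‖ ^ 2) (fun z ↦ g z - m • z) a b
      = bregmanDiv h g a b - m / 2 * ‖b - a‖ ^ 2 := by
  have hb : b = a + (b - a) := by abel
  simp only [bregmanDiv, inner_sub_left, real_inner_smul_left]
  rw [hb, norm_add_sq_real, add_sub_cancel_left]
  ring

variable {h g}

lemma sq_norm_sub_le_mul_bregmanDiv {K : ℝ} (hK : 0 < K)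
    (hnonneg : ∀ a b, 0 ≤ bregmanDiv h g a b)
    (hle : ∀ a b, bregmanDiv h g a b ≤ K / 2 * ‖b - a‖ ^ 2) (a b : E) :
    ‖g b - g a‖ ^ 2 ≤ 2 * K * bregmanDiv h g a b := by
  set w := g b - g a
  -- Test the lower bound at the point `z` reached from `b` by a gradient step of length `1 / K`.
  have hstep := bregmanDiv_add_bregmanDiv_add_inner h g a b (b - K⁻¹ • w)
  have hz := hnonneg a (b - K⁻¹ • w)
  have hzb := hle b (b - K⁻¹ • w)
  rw [sub_sub_cancel_left, norm_neg, norm_smul, Real.norm_of_nonneg (inv_nonneg.2 hK.le)] at hzb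
  rw [sub_sub_cancel_left, inner_neg_right, real_inner_smul_right,
    real_inner_self_eq_norm_sq] at hstep
  have hzb' : K / 2 * (K⁻¹ * ‖w‖) ^ 2 = K⁻¹ / 2 * ‖w‖ ^ 2 := by field_simp
  have hhalf : K⁻¹ / 2 * ‖w‖ ^ 2 ≤ bregmanDiv h g a b := by linarith
  calc ‖w‖ ^ 2 = 2 * K * (K⁻¹ / 2 * ‖w‖ ^ 2) := by field_simp
    _ ≤ 2 * K * bregmanDiv h g a b := by gcongr

lemma sq_norm_sub_le_mul_inner_of_bregmanDiv_bounds {K : ℝ} (hK : 0 < K)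
    (hnonneg : ∀ a b, 0 ≤ bregmanDiv h g a b)
    (hle : ∀ a b, bregmanDiv h g a b ≤ K / 2 * ‖b - a‖ ^ 2) (a b : E) :
    ‖g a - g b‖ ^ 2 ≤ K * ⟪g a - g b, a - b⟫_ℝ := by
  have hab := sq_norm_sub_le_mul_bregmanDiv hK hnonneg hle a b
  have hba := sq_norm_sub_le_mul_bregmanDiv hK hnonneg hle b a
  rw [norm_sub_rev] at hab
  rw [← bregmanDiv_add_bregmanDiv_swap]
  linarith

lemma mul_sq_norm_sub_le_inner_of_bregmanDiv {m : ℝ}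
    (hm : ∀ a b, m / 2 * ‖b - a‖ ^ 2 ≤ bregmanDiv h g a b) (a b : E) :
    m * ‖a - b‖ ^ 2 ≤ ⟪g a - g b, a - b⟫_ℝ := by
  have hab := hm a b
  have hba := hm b a
  rw [norm_sub_rev] at hab
  rw [← bregmanDiv_add_bregmanDiv_swap]
  linarith

end Bregman

section Gradient

variable [CompleteSpace E] {f : E → ℝ}

lemma hasDerivAt_comp_add_smul (hf : Differentiable ℝ f) (x v : E) (t : ℝ) :
    HasDerivAt (fun s : ℝ ↦ f (x + s • v)) ⟪gradient f (x + t • v), v⟫_ℝ t := by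
  have hline : HasDerivAt (fun s : ℝ ↦ x + s • v) v t := by
    simpa using ((hasDerivAt_id t).smul_const v).const_add x
  simpa [Function.comp_def] using
    (hf (x + t • v)).hasGradientAt.hasFDerivAt.comp_hasDerivAt t hline

lemma bregmanDiv_gradient_le_of_lipschitz {L : ℝ} (hf : Differentiable ℝ f)
    (hlip : ∀ x y, ‖gradient f x - gradient f y‖ ≤ L * ‖x - y‖) (x y : E) :
    bregmanDiv f (gradient f) x y ≤ L / 2 * ‖y - x‖ ^ 2 := by
  set v := y - x
  set c := ⟪gradient f x, v⟫_ℝ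
  have hslope (t : ℝ) (ht : 0 ≤ t) : ⟪gradient f (x + t • v), v⟫_ℝ ≤ c + L * t * ‖v‖ ^ 2 := by
    have hdist := hlip (x + t • v) x
    rw [add_sub_cancel_left, norm_smul, Real.norm_of_nonneg ht] at hdist
    have hcs := real_inner_le_norm (gradient f (x + t • v) - gradient f x) v
    rw [inner_sub_left] at hcs
    nlinarith [norm_nonneg v]
  have hquad (t : ℝ) : HasDerivAt (fun s : ℝ ↦ f x + s * c + L / 2 * s ^ 2 * ‖v‖ ^ 2)
      (c + L * t * ‖v‖ ^ 2) t := by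
    refine ((((hasDerivAt_id t).mul_const c).const_add (f x)).add
      (((hasDerivAt_pow 2 t).const_mul (L / 2)).mul_const (‖v‖ ^ 2))).congr_deriv ?_
    norm_num only [one_mul, pow_one]
    ring
  have hcmp := image_le_of_deriv_right_le_deriv_boundary
    (fun t _ ↦ (hasDerivAt_comp_add_smul hf x v t).continuousAt.continuousWithinAt)
    (fun t _ ↦ (hasDerivAt_comp_add_smul hf x v t).hasDerivWithinAt)
    (by simp) (fun t _ ↦ (hquad t).continuousAt.continuousWithinAt)
    (fun t _ ↦ (hquad t).hasDerivWithinAt) (fun t ht ↦ hslope t ht.1)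
    (Set.right_mem_Icc.2 zero_le_one)
  simp only [one_smul, one_mul, one_pow, mul_one, v, add_sub_cancel] at hcmp
  unfold bregmanDiv
  linarith

lemma sq_norm_gradient_sub_add_le {m L : ℝ} (hm : 0 ≤ m) (hmL : m ≤ L)
    (hf : Differentiable ℝ f)
    (hsc : ∀ x y, f y ≥ f x + ⟪gradient f x, y - x⟫_ℝ + m / 2 * ‖y - x‖ ^ 2)
    (hlip : ∀ x y, ‖gradient f x - gradient f y‖ ≤ L * ‖x - y‖) (x y : E) :
    ‖gradient f x - gradient f y‖ ^ 2 + m * L * ‖x - y‖ ^ 2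
      ≤ (m + L) * ⟪gradient f x - gradient f y, x - y⟫_ℝ := by
  have hconv (a b : E) : m / 2 * ‖b - a‖ ^ 2 ≤ bregmanDiv f (gradient f) a b := by
    unfold bregmanDiv
    linarith [hsc a b]
  rcases hmL.lt_or_eq with hlt | rfl
  · have hcoco := sq_norm_sub_le_mul_inner_of_bregmanDiv_bounds (sub_pos.2 hlt)
      (h := fun z ↦ f z - m / 2 * ‖z‖ ^ 2) (g := fun z ↦ gradient f z - m • z)
      (fun a b ↦ by linarith [bregmanDiv_sub_half_sq_norm f (gradient f) m a b, hconv a b])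
      (fun a b ↦ by
        linarith [bregmanDiv_sub_half_sq_norm f (gradient f) m a b,
          bregmanDiv_gradient_le_of_lipschitz hf hlip a b]) x y
    have hsub : gradient f x - m • x - (gradient f y - m • y)
        = (gradient f x - gradient f y) - m • (x - y) := by module
    have hnorm : ‖(gradient f x - gradient f y) - m • (x - y)‖ ^ 2 = ‖gradient f x - gradient f y‖ ^ 2
        - 2 * m * ⟪gradient f x - gradient f y, x - y⟫_ℝ + m ^ 2 * ‖x - y‖ ^ 2 := by
      rw [norm_sub_sq_real, real_inner_smul_right, norm_smul, Real.norm_of_nonneg hm]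
      ring
    have hinner : ⟪(gradient f x - gradient f y) - m • (x - y), x - y⟫_ℝ
        = ⟪gradient f x - gradient f y, x - y⟫_ℝ - m * ‖x - y‖ ^ 2 := by
      rw [inner_sub_left, real_inner_smul_left, real_inner_self_eq_norm_sq]
    rw [hsub, hnorm, hinner] at hcoco
    linarith
  · have hmono := mul_sq_norm_sub_le_inner_of_bregmanDiv hconv x y
    have hsq := pow_le_pow_left₀ (norm_nonneg _) (hlip x y) 2
    nlinarith

end Gradient

lemma norm_mem_Icc_of_sq_norm_add_le {m L : ℝ} (hmL₀ : 0 ≤ m + L) (hmL : m ≤ L) {u d : E}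
    (hkey : ‖d‖ ^ 2 + m * L * ‖u‖ ^ 2 ≤ (m + L) * ⟪d, u⟫_ℝ) :
    m * ‖u‖ ≤ ‖d‖ ∧ ‖d‖ ≤ L * ‖u‖ := by
  have hcs := mul_le_mul_of_nonneg_left (real_inner_le_norm d u) hmL₀
  have hprod : (‖d‖ - m * ‖u‖) * (‖d‖ - L * ‖u‖) ≤ 0 := by nlinarith
  have hu := mul_le_mul_of_nonneg_right hmL (norm_nonneg u)
  constructor <;> nlinarith

lemma norm_sub_smul_le_of_sq_norm_add_le {m L μ : ℝ} (hm : 0 < m) (hmL : m ≤ L) (hμ : 0 ≤ μ)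
    {u d : E} (hkey : ‖d‖ ^ 2 + m * L * ‖u‖ ^ 2 ≤ (m + L) * ⟪d, u⟫_ℝ) :
    ‖u - μ • d‖ ≤ max |1 - μ * m| |1 - μ * L| * ‖u‖ := by
  set σ := max |1 - μ * m| |1 - μ * L|
  have hmL₀ : 0 < m + L := by linarith
  obtain ⟨hlo, hhi⟩ := norm_mem_Icc_of_sq_norm_add_le hmL₀.le hmL hkey
  have hexp : ‖u - μ • d‖ ^ 2 = ‖u‖ ^ 2 - 2 * μ * ⟪d, u⟫_ℝ + μ ^ 2 * ‖d‖ ^ 2 := by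
    rw [norm_sub_sq_real, real_inner_smul_right, norm_smul, Real.norm_of_nonneg hμ,
      real_inner_comm]
    ring
  have hinner := mul_le_mul_of_nonneg_left hkey (by positivity : 0 ≤ 2 * μ)
  -- After bounding `⟪d, u⟫` by `hkey`, the coefficient of `‖d‖ ^ 2` is `μ (μ (m + L) - 2)`.
  have hsq : (m + L) * ‖u - μ • d‖ ^ 2 ≤ (m + L) * (σ * ‖u‖) ^ 2 := by
    rcases le_total (μ * (m + L)) 2 with hstep | hstep
    · have hσ : (1 - μ * m) ^ 2 ≤ σ ^ 2 := sq_le_sq.2 ((le_max_left _ _).trans (le_abs_self σ))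
      have hd := pow_le_pow_left₀ (by positivity) hlo 2
      nlinarith [mul_le_mul_of_nonneg_left hd (mul_nonneg hμ (sub_nonneg.2 hstep)),
        mul_le_mul_of_nonneg_right hσ (sq_nonneg ‖u‖)]
    · have hσ : (1 - μ * L) ^ 2 ≤ σ ^ 2 := sq_le_sq.2 ((le_max_right _ _).trans (le_abs_self σ))
      have hd := pow_le_pow_left₀ (norm_nonneg d) hhi 2
      nlinarith [mul_le_mul_of_nonneg_left hd (mul_nonneg hμ (sub_nonneg.2 hstep)),
        mul_le_mul_of_nonneg_right hσ (sq_nonneg ‖u‖)]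
  have hσ₀ : 0 ≤ σ := (abs_nonneg _).trans (le_max_left _ _)
  exact le_of_sq_le_sq (le_of_mul_le_mul_left hsq hmL₀) (by positivity)

theorem stmt2 (n : ℕ) (f : EuclideanSpace ℝ (Fin n) → ℝ) (m L μ : ℝ)
    (hm : 0 < m) (hmL : m ≤ L) (hμ : 0 < μ)
    (hdiff : Differentiable ℝ f)
    (hsc : ∀ x y : EuclideanSpace ℝ (Fin n),
      f y ≥ f x + ⟪gradient f x, y - x⟫_ℝ + m / 2 * ‖y - x‖ ^ 2)
    (hlip : ∀ x y : EuclideanSpace ℝ (Fin n),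
      ‖gradient f x - gradient f y‖ ≤ L * ‖x - y‖) :
    ∀ x y : EuclideanSpace ℝ (Fin n),
      ‖(x - μ • gradient f x) - (y - μ • gradient f y)‖ ≤
        max |1 - μ * m| |1 - μ * L| * ‖x - y‖ := by
  intro x y
  have hkey := sq_norm_gradient_sub_add_le hm.le hmL hdiff hsc hlip x y
  calc ‖(x - μ • gradient f x) - (y - μ • gradient f y)‖
      = ‖(x - y) - μ • (gradient f x - gradient f y)‖ := by congr 1; module
    _ ≤ max |1 - μ * m| |1 - μ * L| * ‖x - y‖ :=
      norm_sub_smul_le_of_sq_norm_add_le hm hmL hμ.le hkey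
end

section
/- Let f be m-strongly convex with L-Lipschitz gradient, g proper closed convex, and 0 < μ < 2/L. Then the proximal gradient flow ẋ = −(x − prox_{μg}(x − μ∇f(x))) has a globally exponentially stable equilibrium x⋆ with rate ρ = 1 − σ, σ = max(|1−μm|,|1−μL|): ‖x(t) − x⋆‖ ≤ e^{−(1−σ)t}‖x(0) − x⋆‖ for all t ≥ 0. -/
/-!
Along the flow, `x⋆` is a fixed point of `T x = prox_{μg}(x - μ∇f x)`, and `T` is
`σ`-Lipschitz: the proximal map is (firmly) nonexpansive because the proximal objective is
`1/μ`-strongly convex, and the gradient step is `σ`-Lipschitz because `∇f - m • id` is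
`1/(L - m)`-cocoercive (Baillon–Haddad applied to the convex, `(L - m)`-smooth function
`f - m/2 ‖·‖²`). Hence `⟪x - x⋆, ẋ⟫ = -‖x - x⋆‖² + ⟪x - x⋆, T x - T x⋆⟫ ≤ -(1 - σ) ‖x - x⋆‖²`,
so `‖x(t) - x⋆‖² e^{2(1-σ)t}` is nonincreasing.
-/

open InnerProductSpace Set Filter Topology

section

variable {E : Type*} [NormedAddCommGroup E] [InnerProductSpace ℝ E]

theorem le_add_inner_gradient_add_sq_of_lipschitz [CompleteSpace E] {f : E → ℝ} {L : ℝ}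
    (hf : Differentiable ℝ f) (hlip : ∀ x y, ‖gradient f x - gradient f y‖ ≤ L * ‖x - y‖)
    (y z : E) : f z ≤ f y + ⟪gradient f y, z - y⟫_ℝ + L / 2 * ‖z - y‖ ^ 2 := by
  set d := z - y with hd
  let φ : ℝ → ℝ := fun s => f (y + s • d) - s * ⟪gradient f y, d⟫_ℝ - L / 2 * s ^ 2 * ‖d‖ ^ 2
  have hφ : ∀ s, HasDerivAt φ
      (⟪gradient f (y + s • d), d⟫_ℝ - ⟪gradient f y, d⟫_ℝ - L * s * ‖d‖ ^ 2) s := by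
    intro s
    have hline : HasDerivAt (fun s : ℝ => y + s • d) d s := by
      simpa using ((hasDerivAt_id s).smul_const d).const_add y
    have hfline := (hf _).hasGradientAt.hasFDerivAt.comp_hasDerivAt s hline
    simp only [InnerProductSpace.toDual_apply_apply] at hfline
    refine ((hfline.sub ((hasDerivAt_id s).mul_const ⟪gradient f y, d⟫_ℝ)).sub
      (((hasDerivAt_pow 2 s).const_mul (L / 2)).mul_const (‖d‖ ^ 2))).congr_deriv ?_
    simp only [one_mul]
    push_cast
    ring
  have hφ' : ∀ s ∈ interior (Icc (0 : ℝ) 1),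
      ⟪gradient f (y + s • d), d⟫_ℝ - ⟪gradient f y, d⟫_ℝ - L * s * ‖d‖ ^ 2 ≤ 0 := by
    intro s hs
    rw [interior_Icc] at hs
    have hcs : ⟪gradient f (y + s • d) - gradient f y, d⟫_ℝ ≤ L * s * ‖d‖ ^ 2 :=
      calc ⟪gradient f (y + s • d) - gradient f y, d⟫_ℝ
          ≤ ‖gradient f (y + s • d) - gradient f y‖ * ‖d‖ := real_inner_le_norm _ _
        _ ≤ L * ‖s • d‖ * ‖d‖ := by
            gcongr
            simpa using hlip (y + s • d) y
        _ = L * s * ‖d‖ ^ 2 := by rw [norm_smul, Real.norm_of_nonneg hs.1.le]; ring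
    rw [inner_sub_left] at hcs
    linarith
  have hanti : AntitoneOn φ (Icc 0 1) :=
    antitoneOn_of_hasDerivWithinAt_nonpos (convex_Icc 0 1)
      (fun s _ => (hφ s).continuousAt.continuousWithinAt)
      (fun s _ => (hφ s).hasDerivWithinAt) hφ'
  have h01 := hanti (left_mem_Icc.2 zero_le_one) (right_mem_Icc.2 zero_le_one) zero_le_one
  simp only [φ, zero_smul, add_zero, one_smul, zero_mul, sub_zero, one_mul, one_pow, ne_eq,
    OfNat.ofNat_ne_zero, not_false_eq_true, zero_pow, mul_zero, hd, add_sub_cancel] at h01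
  linarith

theorem norm_sub_sq_le_mul_inner_of_sandwich {f : E → ℝ} {G : E → E} {c : ℝ} (hc : 0 ≤ c)
    (hlow : ∀ x y, f x + ⟪G x, y - x⟫_ℝ ≤ f y)
    (hup : ∀ x y, f y ≤ f x + ⟪G x, y - x⟫_ℝ + c / 2 * ‖y - x‖ ^ 2) (x y : E) :
    ‖G x - G y‖ ^ 2 ≤ c * ⟪G x - G y, x - y⟫_ℝ := by
  -- compare `f` at `b` and at `w = b - t • (G b - G a)` through both bounds
  have key : ∀ a b (t : ℝ),
      f a + ⟪G a, b - a⟫_ℝ - f b ≤ (c * t ^ 2 / 2 - t) * ‖G a - G b‖ ^ 2 := by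
    intro a b t
    have h1 := hlow a (b - t • (G b - G a))
    have h2 := hup b (b - t • (G b - G a))
    have e1 : b - t • (G b - G a) - a = (b - a) - t • (G b - G a) := by abel
    have e2 : b - t • (G b - G a) - b = -(t • (G b - G a)) := by abel
    rw [e1, inner_sub_right, real_inner_smul_right] at h1
    rw [e2, inner_neg_right, real_inner_smul_right, norm_neg, norm_smul, mul_pow,
      Real.norm_eq_abs, sq_abs, norm_sub_rev] at h2
    have e3 : ⟪G b, G b - G a⟫_ℝ - ⟪G a, G b - G a⟫_ℝ = ‖G a - G b‖ ^ 2 := by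
      rw [← inner_sub_left, real_inner_self_eq_norm_sq, norm_sub_rev]
    have e4 := congrArg (t * ·) e3
    simp only [mul_sub] at e4
    linarith
  have hcross : ⟪G x, y - x⟫_ℝ + ⟪G y, x - y⟫_ℝ = -⟪G x - G y, x - y⟫_ℝ := by
    rw [← neg_sub x y, inner_neg_right, inner_sub_left]; ring
  have hsum : ∀ t : ℝ, -⟪G x - G y, x - y⟫_ℝ ≤ (c * t ^ 2 - 2 * t) * ‖G x - G y‖ ^ 2 := by
    intro t
    have h := add_le_add (key x y t) (key y x t)
    rw [norm_sub_rev (G y)] at h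
    linarith
  rcases hc.eq_or_lt with rfl | hc
  · have hI : ⟪G x - G y, x - y⟫_ℝ = 0 := by
      linarith [hlow x y, hup x y, hlow y x, hup y x]
    nlinarith [hsum 1, sq_nonneg ‖G x - G y‖]
  · have h := hsum c⁻¹
    have e : c * c⁻¹ ^ 2 - 2 * c⁻¹ = -c⁻¹ := by field_simp; ring
    rw [e] at h
    exact (inv_mul_le_iff₀ hc).1 (by linarith)

theorem inner_mem_Icc_of_norm_sq_le_mul_inner {c : ℝ} (hc : 0 ≤ c) {e h : E}
    (he : ‖e‖ ^ 2 ≤ c * ⟪e, h⟫_ℝ) : ⟪e, h⟫_ℝ ∈ Icc 0 (c * ‖h‖ ^ 2) := by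
  have hcs := real_inner_le_norm e h
  rcases hc.eq_or_lt with rfl | hc
  · have : e = 0 := by simpa using he
    simp [this]
  · constructor <;> nlinarith [norm_nonneg e, norm_nonneg h, sq_nonneg (‖e‖ - c * ‖h‖)]

theorem norm_smul_sub_smul_le_of_norm_sq_le_mul_inner {α μ c : ℝ} (hμ : 0 ≤ μ) (hc : 0 ≤ c)
    {e h : E} (he : ‖e‖ ^ 2 ≤ c * ⟪e, h⟫_ℝ) :
    ‖α • h - μ • e‖ ≤ max |α| |α - μ * c| * ‖h‖ := by
  set σ := max |α| |α - μ * c|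
  obtain ⟨hs0, hs1⟩ := inner_mem_Icc_of_norm_sq_le_mul_inner hc he
  have hexp : ‖α • h - μ • e‖ ^ 2
      = α ^ 2 * ‖h‖ ^ 2 - 2 * α * μ * ⟪e, h⟫_ℝ + μ ^ 2 * ‖e‖ ^ 2 := by
    rw [norm_sub_sq_real, norm_smul, norm_smul, real_inner_smul_left, real_inner_smul_right,
      real_inner_comm, mul_pow, mul_pow, Real.norm_eq_abs, Real.norm_eq_abs, sq_abs, sq_abs]
    ring
  have hα : α ^ 2 ≤ σ ^ 2 := sq_le_sq.2 ((le_max_left _ _).trans (le_abs_self σ))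
  have hβ : (α - μ * c) ^ 2 ≤ σ ^ 2 := sq_le_sq.2 ((le_max_right _ _).trans (le_abs_self σ))
  -- the bound is affine in `⟪e, h⟫` after using `he`, so it suffices to check the endpoints
  have hsq : ‖α • h - μ • e‖ ^ 2 ≤ (σ * ‖h‖) ^ 2 := by
    have hμe : μ ^ 2 * ‖e‖ ^ 2 ≤ μ ^ 2 * (c * ⟪e, h⟫_ℝ) := by gcongr
    rw [hexp, mul_pow]
    rcases le_total (μ * c) (2 * α) with hsmall | hlarge
    · nlinarith [mul_nonneg hμ hs0, sq_nonneg ‖h‖]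
    · nlinarith [mul_nonneg hμ (sub_nonneg.2 hs1), sq_nonneg ‖h‖]
  exact pow_le_pow_iff_left₀ (norm_nonneg _) (by positivity) two_ne_zero |>.1 hsq

theorem norm_sub_smul_gradient_sub_le [CompleteSpace E] {f : E → ℝ} {m L μ : ℝ} (hmL : m ≤ L)
    (hμ : 0 ≤ μ) (hf : Differentiable ℝ f)
    (hsc : ∀ x y, f y ≥ f x + ⟪gradient f x, y - x⟫_ℝ + m / 2 * ‖y - x‖ ^ 2)
    (hlip : ∀ x y, ‖gradient f x - gradient f y‖ ≤ L * ‖x - y‖) (a b : E) :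
    ‖(a - μ • gradient f a) - (b - μ • gradient f b)‖
      ≤ max |1 - μ * m| |1 - μ * L| * ‖a - b‖ := by
  let G : E → E := fun z => gradient f z - m • z
  have hquad : ∀ x y : E, m / 2 * ‖y‖ ^ 2
      = m / 2 * ‖x‖ ^ 2 + ⟪m • x, y - x⟫_ℝ + m / 2 * ‖y - x‖ ^ 2 := by
    intro x y
    rw [norm_sub_sq_real, real_inner_smul_left, inner_sub_right, real_inner_self_eq_norm_sq,
      real_inner_comm x y]
    ring
  have hG : ∀ x y, ⟪G x, y - x⟫_ℝ = ⟪gradient f x, y - x⟫_ℝ - ⟪m • x, y - x⟫_ℝ :=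
    fun x y => inner_sub_left _ _ _
  have hco := norm_sub_sq_le_mul_inner_of_sandwich (f := fun z => f z - m / 2 * ‖z‖ ^ 2) (G := G)
    (sub_nonneg.2 hmL)
    (fun x y => by have := hsc x y; have := hquad x y; have := hG x y; linarith)
    (fun x y => by
      have := le_add_inner_gradient_add_sq_of_lipschitz hf hlip x y
      have := hquad x y; have := hG x y; linarith) a b
  have hstep : (a - μ • gradient f a) - (b - μ • gradient f b)
      = (1 - μ * m) • (a - b) - μ • (G a - G b) := by
    simp only [G]; module
  rw [hstep, show 1 - μ * L = 1 - μ * m - μ * (L - m) by ring]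
  exact norm_smul_sub_smul_le_of_norm_sq_le_mul_inner hμ (sub_nonneg.2 hmL) hco

theorem StrongConvexOn.add_sq_le_of_isMinOn {s : Set E} {m : ℝ} {F : E → ℝ} {p z : E}
    (hF : StrongConvexOn s m F) (hp : IsMinOn F s p) (hps : p ∈ s) (hz : z ∈ s) :
    F p + m / 2 * ‖z - p‖ ^ 2 ≤ F z := by
  have hseg : ∀ t ∈ Ioo (0 : ℝ) 1, (1 - t) * (m / 2 * ‖z - p‖ ^ 2) ≤ F z - F p := by
    rintro t ⟨ht0, ht1⟩
    have hconv := hF.2 hps hz (sub_nonneg.2 ht1.le) ht0.le (sub_add_cancel 1 t)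
    have hmin := isMinOn_iff.1 hp _ (hF.1 hps hz (sub_nonneg.2 ht1.le) ht0.le (sub_add_cancel 1 t))
    rw [smul_eq_mul, smul_eq_mul, norm_sub_rev] at hconv
    have : t * ((1 - t) * (m / 2 * ‖z - p‖ ^ 2)) ≤ t * (F z - F p) := by
      nlinarith
    exact le_of_mul_le_mul_left this ht0
  have hlim : Tendsto (fun t : ℝ => (1 - t) * (m / 2 * ‖z - p‖ ^ 2)) (𝓝[>] 0)
      (𝓝 (m / 2 * ‖z - p‖ ^ 2)) := by
    have : Continuous fun t : ℝ => (1 - t) * (m / 2 * ‖z - p‖ ^ 2) := by fun_prop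
    simpa using (this.tendsto 0).mono_left nhdsWithin_le_nhds
  have := le_of_tendsto hlim (eventually_of_mem (Ioo_mem_nhdsGT zero_lt_one) hseg)
  linarith

theorem ConvexOn.strongConvexOn_add_mul_norm_sub_sq {s : Set E} {g : E → ℝ}
    (hg : ConvexOn ℝ s g) (c : ℝ) (v : E) :
    StrongConvexOn s (2 * c) fun z => g z + c * ‖z - v‖ ^ 2 := by
  rw [strongConvexOn_iff_convex]
  have hlin : ConvexOn ℝ s fun z => -(2 * c) * ⟪v, z⟫_ℝ + c * ‖v‖ ^ 2 := by
    refine ((((innerₗ E v).smulRight (-(2 * c))).convexOn hg.1).add_const (c * ‖v‖ ^ 2)).congr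
      fun z _ => ?_
    simp [mul_comm]
  refine (hg.add hlin).congr fun z _ => ?_
  simp only [Pi.add_apply, norm_sub_sq_real, real_inner_comm z v]
  ring

def IsProx (g : E → ℝ) (μ : ℝ) (P : E → E) : Prop :=
  ∀ v, IsMinOn (fun z => g z + 1 / (2 * μ) * ‖z - v‖ ^ 2) univ (P v)

namespace IsProx

variable {g : E → ℝ} {μ : ℝ} {P : E → E}

theorem norm_sub_sq_le_inner (hP : IsProx g μ P) (hg : ConvexOn ℝ univ g) (hμ : 0 < μ)
    (u v : E) : ‖P u - P v‖ ^ 2 ≤ ⟪u - v, P u - P v⟫_ℝ := by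
  have hgrowth : ∀ w z, g (P w) + 1 / (2 * μ) * ‖P w - w‖ ^ 2 + 1 / (2 * μ) * ‖z - P w‖ ^ 2
      ≤ g z + 1 / (2 * μ) * ‖z - w‖ ^ 2 := fun w z => by
    have := (hg.strongConvexOn_add_mul_norm_sub_sq (1 / (2 * μ)) w).add_sq_le_of_isMinOn
      (hP w) (mem_univ _) (mem_univ z)
    rwa [mul_div_cancel_left₀ _ two_ne_zero] at this
  have huv := hgrowth u (P v)
  have hvu := hgrowth v (P u)
  have hsum : ‖P u - P v‖ ^ 2 ≤ ⟪u - v, P u - P v⟫_ℝ ↔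
      ‖P u - u‖ ^ 2 + ‖P v - v‖ ^ 2 + 2 * ‖P u - P v‖ ^ 2 ≤ ‖P v - u‖ ^ 2 + ‖P u - v‖ ^ 2 := by
    simp only [norm_sub_sq_real, inner_sub_left, inner_sub_right, real_inner_comm]
    constructor <;> intro h <;> linarith
  rw [norm_sub_rev (P v) (P u)] at huv
  rw [hsum]
  refine le_of_mul_le_mul_left ?_ (by positivity : 0 < 1 / (2 * μ))
  linarith

theorem norm_sub_le (hP : IsProx g μ P) (hg : ConvexOn ℝ univ g) (hμ : 0 < μ) (u v : E) :
    ‖P u - P v‖ ≤ ‖u - v‖ := by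
  have h := (hP.norm_sub_sq_le_inner hg hμ u v).trans (real_inner_le_norm _ _)
  rw [sq] at h
  rcases (norm_nonneg (P u - P v)).eq_or_lt with h0 | h0
  · rw [← h0]; exact norm_nonneg _
  · exact le_of_mul_le_mul_right h h0

end IsProx

theorem norm_le_exp_mul_norm_of_inner_deriv_le {y y' : ℝ → E} {ρ : ℝ}
    (hy : ∀ t, 0 ≤ t → HasDerivAt y (y' t) t)
    (hdecay : ∀ t, 0 < t → ⟪y t, y' t⟫_ℝ ≤ -ρ * ‖y t‖ ^ 2) {t : ℝ} (ht : 0 ≤ t) :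
    ‖y t‖ ≤ Real.exp (-ρ * t) * ‖y 0‖ := by
  let w : ℝ → ℝ := fun t => ‖y t‖ ^ 2 * Real.exp (2 * ρ * t)
  have hw : ∀ t, 0 ≤ t → HasDerivAt w
      (2 * ⟪y t, y' t⟫_ℝ * Real.exp (2 * ρ * t) + ‖y t‖ ^ 2 * (Real.exp (2 * ρ * t) * (2 * ρ))) t :=
    fun t ht => (hy t ht).norm_sq.mul (((hasDerivAt_id t).const_mul (2 * ρ)).exp.congr_deriv
      (by simp))
  have hanti : AntitoneOn w (Ici 0) := by
    refine antitoneOn_of_hasDerivWithinAt_nonpos (convex_Ici 0)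
      (fun t ht => (hw t ht).continuousAt.continuousWithinAt)
      (fun t ht => (hw t (interior_subset ht)).hasDerivWithinAt) fun t ht => ?_
    rw [interior_Ici] at ht
    have := hdecay t ht
    have := Real.exp_pos (2 * ρ * t)
    nlinarith
  have hw0 := hanti self_mem_Ici ht ht
  simp only [w, mul_zero, Real.exp_zero, mul_one] at hw0
  have hsq : ‖y t‖ ^ 2 ≤ (Real.exp (-ρ * t) * ‖y 0‖) ^ 2 := by
    have e : Real.exp (2 * ρ * t) * Real.exp (-ρ * t) ^ 2 = 1 := by
      rw [← Real.exp_nat_mul, ← Real.exp_add, ← Real.exp_zero]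
      congr 1
      push_cast
      ring
    calc ‖y t‖ ^ 2 = ‖y t‖ ^ 2 * Real.exp (2 * ρ * t) * Real.exp (-ρ * t) ^ 2 := by
          rw [mul_assoc, e, mul_one]
      _ ≤ ‖y 0‖ ^ 2 * Real.exp (-ρ * t) ^ 2 := by gcongr
      _ = _ := by ring
  exact pow_le_pow_iff_left₀ (norm_nonneg _) (by positivity) two_ne_zero |>.1 hsq

end

theorem stmt7_general (n : ℕ) (f g : EuclideanSpace ℝ (Fin n) → ℝ) (m L μ : ℝ)
    (hmL : m ≤ L) (hμ : 0 < μ)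
    (hdiff : Differentiable ℝ f)
    (hsc : ∀ x y : EuclideanSpace ℝ (Fin n),
      f y ≥ f x + ⟪gradient f x, y - x⟫_ℝ + m / 2 * ‖y - x‖ ^ 2)
    (hlip : ∀ x y : EuclideanSpace ℝ (Fin n),
      ‖gradient f x - gradient f y‖ ≤ L * ‖x - y‖)
    (hg : ConvexOn ℝ Set.univ g)
    (P : EuclideanSpace ℝ (Fin n) → EuclideanSpace ℝ (Fin n))
    (hP : ∀ v : EuclideanSpace ℝ (Fin n),
      IsMinOn (fun z => g z + 1 / (2 * μ) * ‖z - v‖ ^ 2) Set.univ (P v))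
    (xstar : EuclideanSpace ℝ (Fin n))
    (hxstar : P (xstar - μ • gradient f xstar) = xstar)
    (x : ℝ → EuclideanSpace ℝ (Fin n)) (hx : Differentiable ℝ x)
    (hode : ∀ t : ℝ, 0 ≤ t →
      deriv x t = -(x t - P (x t - μ • gradient f (x t)))) :
    ∀ t : ℝ, 0 ≤ t →
      ‖x t - xstar‖ ≤
        Real.exp (-(1 - max |1 - μ * m| |1 - μ * L|) * t) * ‖x 0 - xstar‖ := by
  intro t ht
  set σ := max |1 - μ * m| |1 - μ * L|
  have hT : ∀ a, ‖P (a - μ • gradient f a) - xstar‖ ≤ σ * ‖a - xstar‖ := fun a => by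
    conv_lhs => rw [← hxstar]
    exact (IsProx.norm_sub_le hP hg hμ _ _).trans
      (norm_sub_smul_gradient_sub_le hmL hμ.le hdiff hsc hlip a xstar)
  refine norm_le_exp_mul_norm_of_inner_deriv_le (y := fun t => x t - xstar)
    (fun t _ => (hx t).hasDerivAt.sub_const xstar) (fun s hs => ?_) ht
  have hsplit : -(x s - P (x s - μ • gradient f (x s)))
      = -(x s - xstar) + (P (x s - μ • gradient f (x s)) - xstar) := by abel
  rw [hode s hs.le, hsplit, inner_add_right, inner_neg_right, real_inner_self_eq_norm_sq]
  nlinarith [real_inner_le_norm (x s - xstar) (P (x s - μ • gradient f (x s)) - xstar), hT (x s),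
    norm_nonneg (x s - xstar)]

theorem stmt7 (n : ℕ) (f g : EuclideanSpace ℝ (Fin n) → ℝ) (m L μ : ℝ)
    (hm : 0 < m) (hmL : m ≤ L) (hμ : 0 < μ) (hμL : μ < 2 / L)
    (hdiff : Differentiable ℝ f)
    (hsc : ∀ x y : EuclideanSpace ℝ (Fin n),
      f y ≥ f x + ⟪gradient f x, y - x⟫_ℝ + m / 2 * ‖y - x‖ ^ 2)
    (hlip : ∀ x y : EuclideanSpace ℝ (Fin n),
      ‖gradient f x - gradient f y‖ ≤ L * ‖x - y‖)
    (hg : ConvexOn ℝ Set.univ g)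
    (P : EuclideanSpace ℝ (Fin n) → EuclideanSpace ℝ (Fin n))
    (hP : ∀ v : EuclideanSpace ℝ (Fin n),
      IsMinOn (fun z => g z + 1 / (2 * μ) * ‖z - v‖ ^ 2) Set.univ (P v))
    (xstar : EuclideanSpace ℝ (Fin n))
    (hxstar : P (xstar - μ • gradient f xstar) = xstar)
    (x : ℝ → EuclideanSpace ℝ (Fin n)) (hx : Differentiable ℝ x)
    (hode : ∀ t : ℝ, 0 ≤ t →
      deriv x t = -(x t - P (x t - μ • gradient f (x t)))) :
    ∀ t : ℝ, 0 ≤ t →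
      ‖x t - xstar‖ ≤
        Real.exp (-(1 - max |1 - μ * m| |1 - μ * L|) * t) * ‖x 0 - xstar‖ :=
  stmt7_general n f g m L μ hmL hμ hdiff hsc hlip hg P hP xstar hxstar x hx hode
end

section
/- Let f be m-strongly convex with L-Lipschitz gradient, g proper closed convex, 0 < μ < 2/L. Then the Douglas–Rachford operator R_{μg} ∘ R_{μf} is σ-contractive with σ = max(|1−μm|,|1−μL|) < 1, and hence has a unique fixed point. -/
/-!
The reflected resolvent `2 Pf - I` sends `u + μ ∇f u` to `u - μ ∇f u`. Since `f` is `m`-strongly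
convex with `L`-Lipschitz gradient, `d = ∇f u - ∇f v` satisfies the interpolation inequality
`⟪d - m (u - v), d - L (u - v)⟫ ≤ 0`: it lies in the ball with diameter `[m (u - v), L (u - v)]`.
Hence the gradient step contracts `‖u - v‖` by `σ = max |1 - μm| |1 - μL|`, while
`‖u - v‖ ≤ ‖(u + μ ∇f u) - (v + μ ∇f v)‖` by monotonicity, so `2 Pf - I` is `σ`-contractive.
The proximal map of a convex function is firmly nonexpansive, so `2 Pg - I` is nonexpansive, and
the Banach fixed point theorem applies to the composition.
-/

open InnerProductSpace Filter Topology

theorem abs_add_abs_le_max_abs_add_abs_sub (a b : ℝ) : |a| + |b| ≤ max |a + b| |a - b| := by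
  rw [le_max_iff]
  rcases le_total 0 a with ha | ha <;> rcases le_total 0 b with hb | hb
  · left; rw [abs_of_nonneg ha, abs_of_nonneg hb]; exact le_abs_self _
  · right; rw [abs_of_nonneg ha, abs_of_nonpos hb, ← sub_eq_add_neg]; exact le_abs_self _
  · right; rw [abs_of_nonpos ha, abs_of_nonneg hb, abs_sub_comm, neg_add_eq_sub]
    exact le_abs_self _
  · left; rw [abs_of_nonpos ha, abs_of_nonpos hb, ← neg_add]; exact neg_le_abs _

theorem max_abs_one_sub_mul_lt_one {μ m L : ℝ} (hμ : 0 < μ) (hm : 0 < m) (hmL : m ≤ L)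
    (hμL : μ * L < 2) : max |1 - μ * m| |1 - μ * L| < 1 := by
  have hμm : 0 < μ * m := mul_pos hμ hm
  have hmL' : μ * m ≤ μ * L := mul_le_mul_of_nonneg_left hmL hμ.le
  rw [max_lt_iff, abs_sub_lt_iff, abs_sub_lt_iff]
  refine ⟨⟨?_, ?_⟩, ?_, ?_⟩ <;> linarith

theorem existsUnique_eq_self_of_norm_sub_le {E : Type*} [NormedAddCommGroup E] [CompleteSpace E]
    {T : E → E} {K : ℝ} (hK₀ : 0 ≤ K) (hK : K < 1) (hT : ∀ x y, ‖T x - T y‖ ≤ K * ‖x - y‖) :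
    ∃! z, T z = z := by
  have hcontr : ContractingWith ⟨K, hK₀⟩ T :=
    ⟨hK, LipschitzWith.of_dist_le_mul fun x y => by rw [dist_eq_norm, dist_eq_norm]; exact hT x y⟩
  exact ⟨_, hcontr.fixedPoint_isFixedPt, fun z hz => hcontr.fixedPoint_unique hz⟩

section InnerProductSpace

variable {E : Type*} [NormedAddCommGroup E] [InnerProductSpace ℝ E]

theorem norm_add_le_norm_sub_of_inner_nonpos {a b : E} (h : ⟪a, b⟫_ℝ ≤ 0) :
    ‖a + b‖ ≤ ‖a - b‖ := by
  refine pow_le_pow_iff_left₀ (norm_nonneg _) (norm_nonneg _) two_ne_zero |>.1 ?_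
  rw [norm_add_sq_real, norm_sub_sq_real]
  linarith

theorem norm_le_norm_add_smul_of_inner_nonneg {w d : E} {μ : ℝ} (hμ : 0 ≤ μ)
    (h : 0 ≤ ⟪w, d⟫_ℝ) : ‖w‖ ≤ ‖w + μ • d‖ := by
  refine pow_le_pow_iff_left₀ (norm_nonneg _) (norm_nonneg _) two_ne_zero |>.1 ?_
  rw [norm_add_sq_real, real_inner_smul_right]
  linarith [mul_nonneg hμ h, sq_nonneg ‖μ • d‖]

theorem norm_two_smul_sub_le_of_sq_norm_le_inner {a b : E} (h : ‖a‖ ^ 2 ≤ ⟪a, b⟫_ℝ) :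
    ‖(2 : ℝ) • a - b‖ ≤ ‖b‖ := by
  refine pow_le_pow_iff_left₀ (norm_nonneg _) (norm_nonneg _) two_ne_zero |>.1 ?_
  rw [norm_sub_sq_real, norm_smul, real_inner_smul_left, Real.norm_two]
  linarith

theorem norm_sub_smul_le_of_inner_sub_smul_nonpos {w d : E} {m L μ : ℝ} (hμ : 0 ≤ μ)
    (h : ⟪d - m • w, d - L • w⟫_ℝ ≤ 0) :
    ‖w - μ • d‖ ≤ max |1 - μ * m| |1 - μ * L| * ‖w‖ := by
  have hball : ‖d - ((m + L) / 2) • w‖ ≤ |L - m| / 2 * ‖w‖ := by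
    have := norm_add_le_norm_sub_of_inner_nonpos h
    rw [show d - m • w + (d - L • w) = (2 : ℝ) • (d - ((m + L) / 2) • w) by module,
      show d - m • w - (d - L • w) = (L - m) • w by module, norm_smul, norm_smul,
      Real.norm_two, Real.norm_eq_abs] at this
    linarith
  have habs := abs_add_abs_le_max_abs_add_abs_sub (1 - μ * ((m + L) / 2)) (μ * ((L - m) / 2))
  rw [show 1 - μ * ((m + L) / 2) + μ * ((L - m) / 2) = 1 - μ * m by ring,
    show 1 - μ * ((m + L) / 2) - μ * ((L - m) / 2) = 1 - μ * L by ring] at habs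
  calc ‖w - μ • d‖ = ‖(1 - μ * ((m + L) / 2)) • w - μ • (d - ((m + L) / 2) • w)‖ := by
        congr 1; module
    _ ≤ |1 - μ * ((m + L) / 2)| * ‖w‖ + μ * (|L - m| / 2 * ‖w‖) := by
        refine (norm_sub_le _ _).trans ?_
        rw [norm_smul, norm_smul, Real.norm_eq_abs, Real.norm_of_nonneg hμ]
        gcongr
    _ = (|1 - μ * ((m + L) / 2)| + |μ * ((L - m) / 2)|) * ‖w‖ := by
        rw [abs_mul, abs_of_nonneg hμ, abs_div, abs_two]; ring
    _ ≤ max |1 - μ * m| |1 - μ * L| * ‖w‖ := by gcongr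

theorem norm_two_smul_resolvent_sub_le {F P : E → E} {m L μ : ℝ} (hm : 0 < m) (hmL : m ≤ L)
    (hμ : 0 ≤ μ)
    (hF : ∀ u v, ⟪(F u - F v) - m • (u - v), (F u - F v) - L • (u - v)⟫_ℝ ≤ 0)
    (hP : ∀ x, P x + μ • F (P x) = x) (x y : E) :
    ‖((2 : ℝ) • P x - x) - ((2 : ℝ) • P y - y)‖ ≤ max |1 - μ * m| |1 - μ * L| * ‖x - y‖ := by
  set w := P x - P y
  set d := F (P x) - F (P y)
  have hreflect : ((2 : ℝ) • P x - x) - ((2 : ℝ) • P y - y) = w - μ • d := by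
    linear_combination (norm := module) hP x - hP y
  have hxy : x - y = w + μ • d := by
    linear_combination (norm := module) hP y - hP x
  have hwd : ⟪d - m • w, d - L • w⟫_ℝ ≤ 0 := hF (P x) (P y)
  have hmono : 0 ≤ ⟪w, d⟫_ℝ := by
    have hexp : ⟪d - m • w, d - L • w⟫_ℝ = ‖d‖ ^ 2 - (m + L) * ⟪w, d⟫_ℝ + m * L * ‖w‖ ^ 2 := by
      simp only [inner_sub_left, inner_sub_right, real_inner_smul_left, real_inner_smul_right,
        real_inner_self_eq_norm_sq, real_inner_comm d w]
      ring
    nlinarith [sq_nonneg ‖d‖, sq_nonneg ‖w‖, mul_nonneg hm.le (hm.le.trans hmL)]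
  rw [hreflect, hxy]
  calc ‖w - μ • d‖ ≤ max |1 - μ * m| |1 - μ * L| * ‖w‖ :=
        norm_sub_smul_le_of_inner_sub_smul_nonpos hμ hwd
    _ ≤ max |1 - μ * m| |1 - μ * L| * ‖w + μ • d‖ :=
        mul_le_mul_of_nonneg_left (norm_le_norm_add_smul_of_inner_nonneg hμ hmono) (by positivity)

theorem sq_norm_sub_le_mul_inner_of_sandwich {h : E → ℝ} {D : E → E} {ℓ : ℝ} (hℓ : 0 < ℓ)
    (hlower : ∀ x y, h x + ⟪D x, y - x⟫_ℝ ≤ h y)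
    (hupper : ∀ x y, h y ≤ h x + ⟪D x, y - x⟫_ℝ + ℓ / 2 * ‖y - x‖ ^ 2) (x y : E) :
    ‖D x - D y‖ ^ 2 ≤ ℓ * ⟪D x - D y, x - y⟫_ℝ := by
  have key : ∀ x y, h x + ⟪D x, y - x⟫_ℝ + ℓ⁻¹ / 2 * ‖D y - D x‖ ^ 2 ≤ h y := by
    intro x y
    -- Evaluate both bounds at the minimiser of the upper bound at `y`.
    have h1 := hlower x (y - ℓ⁻¹ • (D y - D x))
    have h2 := hupper y (y - ℓ⁻¹ • (D y - D x))
    rw [sub_right_comm, inner_sub_right, real_inner_smul_right] at h1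
    rw [sub_sub_cancel_left, inner_neg_right, real_inner_smul_right, norm_neg, norm_smul,
      mul_pow, Real.norm_of_nonneg (inv_nonneg.2 hℓ.le)] at h2
    have hΔ : ⟪D y, D y - D x⟫_ℝ - ⟪D x, D y - D x⟫_ℝ = ‖D y - D x‖ ^ 2 := by
      rw [← inner_sub_left, real_inner_self_eq_norm_sq]
    have hℓ' : ℓ / 2 * ℓ⁻¹ ^ 2 = ℓ⁻¹ / 2 := by field_simp
    linear_combination h1 + h2 - ℓ⁻¹ * hΔ + ‖D y - D x‖ ^ 2 * hℓ'
  have h1 := key x y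
  have h2 := key y x
  rw [norm_sub_rev, ← neg_sub x y, inner_neg_right] at h1
  have : ℓ⁻¹ * ‖D x - D y‖ ^ 2 ≤ ⟪D x - D y, x - y⟫_ℝ := by
    rw [inner_sub_left]; linarith
  rwa [inv_mul_le_iff₀ hℓ] at this

theorem inner_sub_le_of_isMinOn_add_sq_norm {g : E → ℝ} (hg : ConvexOn ℝ Set.univ g) {c : ℝ}
    {u v : E} (hu : IsMinOn (fun z => g z + c * ‖z - v‖ ^ 2) Set.univ u) (z : E) :
    g u + 2 * c * ⟪v - u, z - u⟫_ℝ ≤ g z := by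
  set A := g z - g u - 2 * c * ⟪v - u, z - u⟫_ℝ
  have hslope : ∀ t ∈ Set.Ioc (0 : ℝ) 1, 0 ≤ A + t * (c * ‖z - u‖ ^ 2) := by
    rintro t ⟨ht0, ht1⟩
    have hmin : g u + c * ‖u - v‖ ^ 2 ≤ g (u + t • (z - u)) + c * ‖u + t • (z - u) - v‖ ^ 2 :=
      hu (Set.mem_univ _)
    have hconv : g (u + t • (z - u)) ≤ (1 - t) * g u + t * g z := by
      rw [show u + t • (z - u) = (1 - t) • u + t • z by module]
      exact hg.2 (Set.mem_univ u) (Set.mem_univ z) (by linarith) ht0.le (by ring)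
    rw [show u + t • (z - u) - v = (u - v) + t • (z - u) by module, norm_add_sq_real,
      real_inner_smul_right, norm_smul, Real.norm_of_nonneg ht0.le, ← neg_sub v u,
      inner_neg_left] at hmin
    have : 0 ≤ t * (A + t * (c * ‖z - u‖ ^ 2)) := by linear_combination hmin + hconv
    exact nonneg_of_mul_nonneg_right (by linarith) ht0
  have hlim : Tendsto (fun t : ℝ => A + t * (c * ‖z - u‖ ^ 2)) (𝓝[>] 0) (𝓝 A) := by
    have hcont : Continuous fun t : ℝ => A + t * (c * ‖z - u‖ ^ 2) := by fun_prop
    exact (hcont.tendsto' 0 A (by simp)).mono_left nhdsWithin_le_nhds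
  have : 0 ≤ A := ge_of_tendsto hlim (eventually_of_mem (Ioc_mem_nhdsGT one_pos) hslope)
  linarith

theorem sq_norm_sub_le_inner_of_isMinOn_add_sq_norm {g : E → ℝ} (hg : ConvexOn ℝ Set.univ g)
    {c : ℝ} (hc : 0 < c) {u₁ u₂ v₁ v₂ : E}
    (hu₁ : IsMinOn (fun z => g z + c * ‖z - v₁‖ ^ 2) Set.univ u₁)
    (hu₂ : IsMinOn (fun z => g z + c * ‖z - v₂‖ ^ 2) Set.univ u₂) :
    ‖u₁ - u₂‖ ^ 2 ≤ ⟪u₁ - u₂, v₁ - v₂⟫_ℝ := by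
  have h₁ := inner_sub_le_of_isMinOn_add_sq_norm hg hu₁ u₂
  have h₂ := inner_sub_le_of_isMinOn_add_sq_norm hg hu₂ u₁
  have hsum : ⟪v₁ - u₁, u₂ - u₁⟫_ℝ + ⟪v₂ - u₂, u₁ - u₂⟫_ℝ
      = ‖u₁ - u₂‖ ^ 2 - ⟪u₁ - u₂, v₁ - v₂⟫_ℝ := by
    rw [← neg_sub u₁ u₂, inner_neg_right, neg_add_eq_sub, ← inner_sub_left,
      show v₂ - u₂ - (v₁ - u₁) = (u₁ - u₂) - (v₁ - v₂) by abel, inner_sub_left,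
      real_inner_self_eq_norm_sq, real_inner_comm]
  nlinarith

theorem norm_two_smul_sub_sub_le_of_isMinOn_add_sq_norm {g : E → ℝ}
    (hg : ConvexOn ℝ Set.univ g) {c : ℝ} (hc : 0 < c) {u₁ u₂ v₁ v₂ : E}
    (hu₁ : IsMinOn (fun z => g z + c * ‖z - v₁‖ ^ 2) Set.univ u₁)
    (hu₂ : IsMinOn (fun z => g z + c * ‖z - v₂‖ ^ 2) Set.univ u₂) :
    ‖((2 : ℝ) • u₁ - v₁) - ((2 : ℝ) • u₂ - v₂)‖ ≤ ‖v₁ - v₂‖ := by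
  rw [show ((2 : ℝ) • u₁ - v₁) - ((2 : ℝ) • u₂ - v₂) = (2 : ℝ) • (u₁ - u₂) - (v₁ - v₂) by module]
  exact norm_two_smul_sub_le_of_sq_norm_le_inner
    (sq_norm_sub_le_inner_of_isMinOn_add_sq_norm hg hc hu₁ hu₂)

variable [CompleteSpace E]

theorem le_add_inner_gradient_add_of_lipschitz {f : E → ℝ} {L : ℝ} (hdiff : Differentiable ℝ f)
    (hlip : ∀ x y, ‖gradient f x - gradient f y‖ ≤ L * ‖x - y‖) (x y : E) :
    f y ≤ f x + ⟪gradient f x, y - x⟫_ℝ + L / 2 * ‖y - x‖ ^ 2 := by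
  set w := y - x
  set ψ : ℝ → ℝ := fun t => f (x + t • w) - t * ⟪gradient f x, w⟫_ℝ - L / 2 * t ^ 2 * ‖w‖ ^ 2
  have hψ : ∀ t : ℝ, HasDerivAt ψ
      (⟪gradient f (x + t • w), w⟫_ℝ - ⟪gradient f x, w⟫_ℝ - L * t * ‖w‖ ^ 2) t := by
    intro t
    have hline : HasDerivAt (fun s : ℝ => x + s • w) w t := by
      simpa using ((hasDerivAt_id t).smul_const w).const_add x
    have hf := (hdiff (x + t • w)).hasGradientAt.hasFDerivAt.comp_hasDerivAt t hline
    rw [toDual_apply_apply] at hf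
    exact ((hf.sub ((hasDerivAt_id t).mul_const _)).sub
      (((hasDerivAt_pow 2 t).const_mul (L / 2)).mul_const _)).congr_deriv (by ring)
  have hanti : AntitoneOn ψ (Set.Ici 0) := by
    refine antitoneOn_of_hasDerivWithinAt_nonpos (convex_Ici 0)
      (fun t _ => (hψ t).continuousAt.continuousWithinAt)
      (fun t _ => (hψ t).hasDerivWithinAt) ?_
    rw [interior_Ici]
    intro t (ht : 0 < t)
    have hgrad : ⟪gradient f (x + t • w) - gradient f x, w⟫_ℝ ≤ L * t * ‖w‖ ^ 2 :=
      calc ⟪gradient f (x + t • w) - gradient f x, w⟫_ℝ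
          ≤ ‖gradient f (x + t • w) - gradient f x‖ * ‖w‖ := real_inner_le_norm _ _
        _ ≤ L * ‖x + t • w - x‖ * ‖w‖ := by gcongr; exact hlip _ _
        _ = L * t * ‖w‖ ^ 2 := by
          rw [add_sub_cancel_left, norm_smul, Real.norm_of_nonneg ht.le]; ring
    rw [inner_sub_left] at hgrad
    linarith
  have := hanti Set.self_mem_Ici (Set.mem_Ici.2 zero_le_one) zero_le_one
  simp only [ψ, w, one_smul, zero_smul, add_zero, one_mul, zero_mul, one_pow, sub_zero,
    add_sub_cancel] at this
  linarith

theorem inner_gradient_sub_ge_of_strongConvex {f : E → ℝ} {m : ℝ}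
    (hsc : ∀ x y, f x + ⟪gradient f x, y - x⟫_ℝ + m / 2 * ‖y - x‖ ^ 2 ≤ f y) (x y : E) :
    m * ‖x - y‖ ^ 2 ≤ ⟪gradient f x - gradient f y, x - y⟫_ℝ := by
  have h1 := hsc x y
  have h2 := hsc y x
  rw [← neg_sub x y, inner_neg_right, norm_neg] at h1
  rw [inner_sub_left]
  linarith

theorem inner_gradient_sub_smul_nonpos {f : E → ℝ} {m L : ℝ} (hm : 0 ≤ m) (hmL : m ≤ L)
    (hdiff : Differentiable ℝ f)
    (hsc : ∀ x y, f x + ⟪gradient f x, y - x⟫_ℝ + m / 2 * ‖y - x‖ ^ 2 ≤ f y)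
    (hlip : ∀ x y, ‖gradient f x - gradient f y‖ ≤ L * ‖x - y‖) (x y : E) :
    ⟪(gradient f x - gradient f y) - m • (x - y),
      (gradient f x - gradient f y) - L • (x - y)⟫_ℝ ≤ 0 := by
  rcases hmL.eq_or_lt with rfl | hlt
  · have hmono := inner_gradient_sub_ge_of_strongConvex hsc x y
    have hd := pow_le_pow_left₀ (norm_nonneg _) (hlip x y) 2
    rw [real_inner_self_eq_norm_sq, norm_sub_sq_real, real_inner_smul_right, norm_smul,
      Real.norm_of_nonneg hm, mul_pow]
    rw [mul_pow] at hd
    linarith [mul_le_mul_of_nonneg_left hmono hm]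
  · -- Cocoercivity of the gradient `∇f - m • id` of the convex function `f - m/2 ‖·‖²`.
    have hsq : ∀ x y : E, ‖y‖ ^ 2 = ‖x‖ ^ 2 + 2 * ⟪x, y - x⟫_ℝ + ‖y - x‖ ^ 2 := by
      intro x y; rw [← norm_add_sq_real, add_sub_cancel]
    have hcoco := sq_norm_sub_le_mul_inner_of_sandwich (sub_pos.2 hlt)
      (h := fun z => f z - m / 2 * ‖z‖ ^ 2) (D := fun z => gradient f z - m • z)
      (fun x y => by
        have := hsc x y
        simp only [inner_sub_left, real_inner_smul_left, hsq x y]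
        linarith)
      (fun x y => by
        have := le_add_inner_gradient_add_of_lipschitz hdiff hlip x y
        simp only [inner_sub_left, real_inner_smul_left, hsq x y]
        linarith) x y
    rw [show gradient f x - m • x - (gradient f y - m • y)
        = (gradient f x - gradient f y) - m • (x - y) by module] at hcoco
    rw [show gradient f x - gradient f y - L • (x - y)
        = (gradient f x - gradient f y - m • (x - y)) - (L - m) • (x - y) by module,
      inner_sub_right, real_inner_smul_right, real_inner_self_eq_norm_sq]
    linarith

end InnerProductSpace

theorem stmt13_general (n : ℕ) (f g : EuclideanSpace ℝ (Fin n) → ℝ) (m L μ : ℝ)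
    (hm : 0 < m) (hmL : m ≤ L) (hμ : 0 < μ) (hμL : μ < 2 / L)
    (hdiff : Differentiable ℝ f)
    (hsc : ∀ x y : EuclideanSpace ℝ (Fin n),
      f y ≥ f x + ⟪gradient f x, y - x⟫_ℝ + m / 2 * ‖y - x‖ ^ 2)
    (hlip : ∀ x y : EuclideanSpace ℝ (Fin n),
      ‖gradient f x - gradient f y‖ ≤ L * ‖x - y‖)
    (hg : ConvexOn ℝ Set.univ g)
    (Pf Pg : EuclideanSpace ℝ (Fin n) → EuclideanSpace ℝ (Fin n))
    (hPf : ∀ v : EuclideanSpace ℝ (Fin n), Pf v + μ • gradient f (Pf v) = v)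
    (hPg : ∀ v : EuclideanSpace ℝ (Fin n),
      IsMinOn (fun z => g z + 1 / (2 * μ) * ‖z - v‖ ^ 2) Set.univ (Pg v)) :
    (∀ x y : EuclideanSpace ℝ (Fin n),
      ‖((2 : ℝ) • Pg ((2 : ℝ) • Pf x - x) - ((2 : ℝ) • Pf x - x)) -
          ((2 : ℝ) • Pg ((2 : ℝ) • Pf y - y) - ((2 : ℝ) • Pf y - y))‖ ≤
        max |1 - μ * m| |1 - μ * L| * ‖x - y‖) ∧
    max |1 - μ * m| |1 - μ * L| < 1 ∧
    ∃! z : EuclideanSpace ℝ (Fin n),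
      (2 : ℝ) • Pg ((2 : ℝ) • Pf z - z) - ((2 : ℝ) • Pf z - z) = z := by
  have hμL' : μ * L < 2 := (lt_div_iff₀ (hm.trans_le hmL)).1 hμL
  have hσ := max_abs_one_sub_mul_lt_one hμ hm hmL hμL'
  have hRf := norm_two_smul_resolvent_sub_le hm hmL hμ.le
    (inner_gradient_sub_smul_nonpos hm.le hmL hdiff hsc hlip) hPf
  have hT : ∀ x y : EuclideanSpace ℝ (Fin n),
      ‖((2 : ℝ) • Pg ((2 : ℝ) • Pf x - x) - ((2 : ℝ) • Pf x - x)) -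
          ((2 : ℝ) • Pg ((2 : ℝ) • Pf y - y) - ((2 : ℝ) • Pf y - y))‖ ≤
        max |1 - μ * m| |1 - μ * L| * ‖x - y‖ := fun x y =>
    (norm_two_smul_sub_sub_le_of_isMinOn_add_sq_norm hg (by positivity) (hPg _) (hPg _)).trans
      (hRf x y)
  exact ⟨hT, hσ, existsUnique_eq_self_of_norm_sub_le (by positivity) hσ hT⟩

theorem stmt13 (n : ℕ) (f g : EuclideanSpace ℝ (Fin n) → ℝ) (m L μ : ℝ)
    (hm : 0 < m) (hmL : m ≤ L) (hμ : 0 < μ) (hμL : μ < 2 / L)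
    (hdiff : Differentiable ℝ f)
    (hsc : ∀ x y : EuclideanSpace ℝ (Fin n),
      f y ≥ f x + ⟪gradient f x, y - x⟫_ℝ + m / 2 * ‖y - x‖ ^ 2)
    (hlip : ∀ x y : EuclideanSpace ℝ (Fin n),
      ‖gradient f x - gradient f y‖ ≤ L * ‖x - y‖)
    (hg : ConvexOn ℝ Set.univ g) (hgc : LowerSemicontinuous g)
    (Pf Pg : EuclideanSpace ℝ (Fin n) → EuclideanSpace ℝ (Fin n))
    (hPf : ∀ v : EuclideanSpace ℝ (Fin n), Pf v + μ • gradient f (Pf v) = v)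
    (hPg : ∀ v : EuclideanSpace ℝ (Fin n),
      IsMinOn (fun z => g z + 1 / (2 * μ) * ‖z - v‖ ^ 2) Set.univ (Pg v)) :
    (∀ x y : EuclideanSpace ℝ (Fin n),
      ‖((2 : ℝ) • Pg ((2 : ℝ) • Pf x - x) - ((2 : ℝ) • Pf x - x)) -
          ((2 : ℝ) • Pg ((2 : ℝ) • Pf y - y) - ((2 : ℝ) • Pf y - y))‖ ≤
        max |1 - μ * m| |1 - μ * L| * ‖x - y‖) ∧
    max |1 - μ * m| |1 - μ * L| < 1 ∧
    ∃! z : EuclideanSpace ℝ (Fin n),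
      (2 : ℝ) • Pg ((2 : ℝ) • Pf z - z) - ((2 : ℝ) • Pf z - z) = z :=
  stmt13_general n f g m L μ hm hmL hμ hμL hdiff hsc hlip hg Pf Pg hPf hPg
end

section
/- Let f be twice continuously differentiable with ∇²f(x) ⪯ L·I, g proper closed convex, 0 < μ < 1/L, and suppose the proximal PL inequality ‖G_μ(x)‖² ≥ γ(F_μ(x) − F_μ⋆) holds with γ > 0. Then along any solution of the proximal gradient flow ẋ = −μ G_μ(x), the Lyapunov function V(x) = F_μ(x) − F_μ⋆ satisfies V̇(x(t)) ≤ −γμ(1 − μL) V(x(t)). -/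
/-!
The prox optimality condition makes `(v - P v) / μ` a subgradient of `g` at `P v`; together with
the minimality of `P w` this squeezes the Moreau envelope at `w` between its linearisation at `v`
and that linearisation plus `‖w - v‖² / (2μ)`, so the envelope is differentiable with gradient
`(v - P v) / μ`. By the chain rule `dF_μ(x) v = ⟪G_μ(x), v - μ ∇²f(x) v⟫`, hence along
`ẋ = -μ G_μ(x)` we get `V̇ = -μ ‖G‖² + μ² ⟪∇²f G, G⟫ ≤ -μ (1 - μL) ‖G‖²`, and the proximal PL
inequality bounds `‖G‖²` below by `γ V`.
-/

open InnerProductSpace Filter Topology Asymptotics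

noncomputable section

variable {E : Type*} [NormedAddCommGroup E] [InnerProductSpace ℝ E]

def IsProxMap (g : E → ℝ) (μ : ℝ) (P : E → E) : Prop :=
  ∀ v, IsMinOn (fun z => g z + 1 / (2 * μ) * ‖z - v‖ ^ 2) Set.univ (P v)

-- `M_{μg}` evaluated through a selection `P` of the proximal map (see `IsProxMap`).
def moreauEnvelope (g : E → ℝ) (μ : ℝ) (P : E → E) (v : E) : ℝ :=
  g (P v) + 1 / (2 * μ) * ‖P v - v‖ ^ 2

theorem ConvexOn.inner_le_sub_of_isMinOn_prox {g : E → ℝ} (hg : ConvexOn ℝ Set.univ g)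
    {μ : ℝ} {v p : E}
    (hp : IsMinOn (fun z => g z + 1 / (2 * μ) * ‖z - v‖ ^ 2) Set.univ p) (z : E) :
    1 / μ * ⟪v - p, z - p⟫_ℝ ≤ g z - g p := by
  -- compare `p` with `(1 - t) • p + t • z`, divide by `t` and let `t → 0⁺`
  have key : ∀ t ∈ Set.Ioc (0 : ℝ) 1,
      1 / μ * ⟪v - p, z - p⟫_ℝ ≤ g z - g p + t * (1 / (2 * μ) * ‖z - p‖ ^ 2) := by
    rintro t ⟨ht0, ht1⟩
    have hconv : g ((1 - t) • p + t • z) ≤ (1 - t) * g p + t * g z := by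
      simpa only [smul_eq_mul] using
        hg.2 (Set.mem_univ p) (Set.mem_univ z) (sub_nonneg.2 ht1) ht0.le (by ring)
    have hmin := isMinOn_iff.mp hp ((1 - t) • p + t • z) (Set.mem_univ _)
    have hnorm : ‖(1 - t) • p + t • z - v‖ ^ 2
        = ‖p - v‖ ^ 2 - 2 * t * ⟪v - p, z - p⟫_ℝ + t ^ 2 * ‖z - p‖ ^ 2 := by
      rw [show (1 - t) • p + t • z - v = (p - v) + t • (z - p) by module, norm_add_sq_real,
        inner_smul_right, norm_smul, mul_pow, Real.norm_eq_abs, sq_abs,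
        ← neg_sub v p, inner_neg_left]
      ring
    rw [hnorm] at hmin
    refine le_of_mul_le_mul_left ?_ ht0
    linear_combination hmin + hconv
  have hlim : Tendsto (fun t => g z - g p + t * (1 / (2 * μ) * ‖z - p‖ ^ 2)) (𝓝[>] 0)
      (𝓝 (g z - g p)) := by
    simpa using ((continuous_id.mul continuous_const).const_add (g z - g p)).continuousWithinAt
      (s := Set.Ioi 0) (x := 0) |>.tendsto
  exact ge_of_tendsto hlim (mem_of_superset (Ioc_mem_nhdsGT one_pos) key)

section Moreau

variable {g : E → ℝ} {μ : ℝ} {P : E → E}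

theorem moreauEnvelope_le (hP : IsProxMap g μ P) (v w : E) :
    moreauEnvelope g μ P w ≤
      moreauEnvelope g μ P v + ⟪(1 / μ) • (v - P v), w - v⟫_ℝ + 1 / (2 * μ) * ‖w - v‖ ^ 2 := by
  have hmin := isMinOn_iff.mp (hP w) (P v) (Set.mem_univ _)
  have hnorm : ‖P v - w‖ ^ 2 = ‖P v - v‖ ^ 2 + 2 * ⟪v - P v, w - v⟫_ℝ + ‖w - v‖ ^ 2 := by
    rw [show P v - w = (P v - v) - (w - v) by abel, norm_sub_sq_real, ← neg_sub v (P v),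
      inner_neg_left, norm_neg]
    ring
  simp only [moreauEnvelope, real_inner_smul_left]
  rw [hnorm] at hmin
  linear_combination hmin

theorem moreauEnvelope_add_inner_le (hg : ConvexOn ℝ Set.univ g) (hμ : 0 < μ)
    (hP : IsProxMap g μ P) (v w : E) :
    moreauEnvelope g μ P v + ⟪(1 / μ) • (v - P v), w - v⟫_ℝ ≤ moreauEnvelope g μ P w := by
  have hsub := hg.inner_le_sub_of_isMinOn_prox (hP v) (P w)
  have hsq : 0 ≤ 1 / (2 * μ) * ‖(P w - w) + (v - P v)‖ ^ 2 := by positivity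
  rw [norm_add_sq_real] at hsq
  rw [show P w - P v = (P w - w) + (w - v) + (v - P v) by abel, inner_add_right, inner_add_right,
    real_inner_self_eq_norm_sq, real_inner_comm] at hsub
  simp only [moreauEnvelope, real_inner_smul_left, norm_sub_rev (P v) v]
  linear_combination hsub + hsq

theorem hasFDerivAt_moreauEnvelope (hg : ConvexOn ℝ Set.univ g) (hμ : 0 < μ)
    (hP : IsProxMap g μ P) (v : E) :
    HasFDerivAt (moreauEnvelope g μ P) (innerSL ℝ ((1 / μ) • (v - P v))) v := by
  rw [hasFDerivAt_iff_isLittleO_nhds_zero]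
  refine IsBigO.trans_isLittleO ?_ (isLittleO_norm_pow_id one_lt_two)
  refine IsBigO.of_bound (1 / (2 * μ)) (Eventually.of_forall fun h => ?_)
  have hle := moreauEnvelope_le hP v (v + h)
  have hge := moreauEnvelope_add_inner_le hg hμ hP v (v + h)
  have hsq : 0 ≤ 1 / (2 * μ) * ‖h‖ ^ 2 := by positivity
  rw [add_sub_cancel_left] at hle hge
  rw [innerSL_apply_apply, Real.norm_eq_abs, norm_pow, norm_norm, abs_le]
  constructor <;> linarith

end Moreau

section ForwardBackward

variable [CompleteSpace E]

def fbEnvelope (f g : E → ℝ) (μ : ℝ) (P : E → E) (x : E) : ℝ :=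
  f x + moreauEnvelope g μ P (x - μ • gradient f x) - μ / 2 * ‖gradient f x‖ ^ 2

def gradMapping (f : E → ℝ) (μ : ℝ) (P : E → E) (x : E) : E :=
  (1 / μ) • (x - P (x - μ • gradient f x))

variable {f g : E → ℝ} {μ : ℝ} {P : E → E}

theorem ContDiff.differentiable_gradient (hf : ContDiff ℝ 2 f) : Differentiable ℝ (gradient f) :=
  (toDual ℝ E).symm.toContinuousLinearEquiv.differentiable.comp
    ((hf.fderiv_right one_add_one_eq_two.le).differentiable one_ne_zero)

theorem hasFDerivAt_fbEnvelope (hg : ConvexOn ℝ Set.univ g) (hμ : 0 < μ) (hP : IsProxMap g μ P)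
    {x : E} (hf : DifferentiableAt ℝ f x) (hgf : DifferentiableAt ℝ (gradient f) x) :
    HasFDerivAt (fbEnvelope f g μ P)
      ((innerSL ℝ (gradMapping f μ P x)).comp
        (ContinuousLinearMap.id ℝ E - μ • fderiv ℝ (gradient f) x)) x := by
  have hfx : HasFDerivAt f (innerSL ℝ (gradient f x)) x := hf.hasGradientAt
  have hH := hgf.hasFDerivAt
  have hstep : HasFDerivAt (fun y => y - μ • gradient f y)
      (ContinuousLinearMap.id ℝ E - μ • fderiv ℝ (gradient f) x) x :=
    (hasFDerivAt_id x).sub (hH.const_smul μ)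
  have hM := (hasFDerivAt_moreauEnvelope hg hμ hP _).comp x hstep
  refine ((hfx.add hM).sub (hH.norm_sq.const_mul (μ / 2))).congr_fderiv ?_
  have hq : (1 / μ) • (x - μ • gradient f x - P (x - μ • gradient f x))
      = gradMapping f μ P x - gradient f x := by
    rw [gradMapping, sub_right_comm, smul_sub, smul_smul, one_div_mul_cancel hμ.ne', one_smul]
  ext v
  simp only [hq, add_apply, sub_apply, ContinuousLinearMap.comp_apply,
    smul_apply, innerSL_apply_apply, ContinuousLinearMap.id_apply, inner_sub_left,
    inner_sub_right, real_inner_smul_right, nsmul_eq_mul, smul_eq_mul]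
  ring

theorem hasDerivAt_fbEnvelope_of_hasDerivAt_eq_neg_gradMapping (hg : ConvexOn ℝ Set.univ g)
    (hμ : 0 < μ) (hP : IsProxMap g μ P) {x : ℝ → E} {t : ℝ} (hf : DifferentiableAt ℝ f (x t))
    (hgf : DifferentiableAt ℝ (gradient f) (x t))
    (hx : HasDerivAt x (-(μ • gradMapping f μ P (x t))) t) :
    HasDerivAt (fun s => fbEnvelope f g μ P (x s))
      (-μ * ‖gradMapping f μ P (x t)‖ ^ 2 + μ ^ 2 *
        ⟪fderiv ℝ (gradient f) (x t) (gradMapping f μ P (x t)), gradMapping f μ P (x t)⟫_ℝ) t := by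
  refine ((hasFDerivAt_fbEnvelope hg hμ hP hf hgf).comp_hasDerivAt t hx).congr_deriv ?_
  simp only [ContinuousLinearMap.comp_apply, sub_apply, smul_apply, innerSL_apply_apply,
    ContinuousLinearMap.id_apply, map_neg, map_smul, inner_sub_right,
    real_inner_smul_right, real_inner_self_eq_norm_sq, real_inner_comm]
  ring

end ForwardBackward

end

theorem stmt17_general (n : ℕ) (f g : EuclideanSpace ℝ (Fin n) → ℝ) (L μ γ Fstar : ℝ)
    (hμ : 0 < μ) (hμL : μ < 1 / L)
    (hf : ContDiff ℝ 2 f)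
    (hhess : ∀ x v : EuclideanSpace ℝ (Fin n),
      ⟪fderiv ℝ (gradient f) x v, v⟫_ℝ ≤ L * ‖v‖ ^ 2)
    (hg : ConvexOn ℝ Set.univ g)
    (P : EuclideanSpace ℝ (Fin n) → EuclideanSpace ℝ (Fin n))
    (hP : ∀ v : EuclideanSpace ℝ (Fin n),
      IsMinOn (fun z => g z + 1 / (2 * μ) * ‖z - v‖ ^ 2) Set.univ (P v))
    -- the forward-backward envelope and its optimal value
    (Fμ : EuclideanSpace ℝ (Fin n) → ℝ)
    (hFμ : ∀ x, Fμ x =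
      f x + (g (P (x - μ • gradient f x)) +
        1 / (2 * μ) * ‖P (x - μ • gradient f x) - (x - μ • gradient f x)‖ ^ 2) -
        μ / 2 * ‖gradient f x‖ ^ 2)
    -- the proximal PL inequality
    (hPL : ∀ x : EuclideanSpace ℝ (Fin n),
      ‖(1 / μ) • (x - P (x - μ • gradient f x))‖ ^ 2 ≥ γ * (Fμ x - Fstar))
    -- a solution of the proximal gradient flow
    (x : ℝ → EuclideanSpace ℝ (Fin n)) (hx : Differentiable ℝ x)
    (hode : ∀ t : ℝ, 0 ≤ t →
      deriv x t = -(μ • ((1 / μ) • (x t - P (x t - μ • gradient f (x t)))))) :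
    ∀ t : ℝ, 0 ≤ t →
      deriv (fun s => Fμ (x s)) t ≤ -(γ * μ * (1 - μ * L)) * (Fμ (x t) - Fstar) := by
  intro t ht
  set G := gradMapping f μ P (x t)
  have hμL' : μ * L < 1 := (lt_div_iff₀ (one_div_pos.mp (hμ.trans hμL))).mp hμL
  have hflow : HasDerivAt x (-(μ • G)) t := hode t ht ▸ (hx t).hasDerivAt
  have hdecay := hasDerivAt_fbEnvelope_of_hasDerivAt_eq_neg_gradMapping hg hμ hP
    (hf.differentiable two_ne_zero _) (hf.differentiable_gradient _) hflow
  obtain rfl : Fμ = fbEnvelope f g μ P := funext hFμ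
  rw [hdecay.deriv]
  calc -μ * ‖G‖ ^ 2 + μ ^ 2 * ⟪fderiv ℝ (gradient f) (x t) G, G⟫_ℝ
      ≤ -μ * ‖G‖ ^ 2 + μ ^ 2 * (L * ‖G‖ ^ 2) := by gcongr; exact hhess _ _
    _ = -(μ * (1 - μ * L)) * ‖G‖ ^ 2 := by ring
    _ ≤ -(μ * (1 - μ * L)) * (γ * (fbEnvelope f g μ P (x t) - Fstar)) :=
      mul_le_mul_of_nonpos_left (hPL (x t)) (by nlinarith)
    _ = -(γ * μ * (1 - μ * L)) * (fbEnvelope f g μ P (x t) - Fstar) := by ring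

theorem stmt17 (n : ℕ) (f g : EuclideanSpace ℝ (Fin n) → ℝ) (L μ γ Fstar : ℝ)
    (hL : 0 < L) (hμ : 0 < μ) (hμL : μ < 1 / L) (hγ : 0 < γ)
    (hf : ContDiff ℝ 2 f)
    (hhess : ∀ x v : EuclideanSpace ℝ (Fin n),
      ⟪fderiv ℝ (gradient f) x v, v⟫_ℝ ≤ L * ‖v‖ ^ 2)
    (hg : ConvexOn ℝ Set.univ g) (hgc : LowerSemicontinuous g)
    (P : EuclideanSpace ℝ (Fin n) → EuclideanSpace ℝ (Fin n))
    (hP : ∀ v : EuclideanSpace ℝ (Fin n),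
      IsMinOn (fun z => g z + 1 / (2 * μ) * ‖z - v‖ ^ 2) Set.univ (P v))
    -- the forward-backward envelope and its optimal value
    (Fμ : EuclideanSpace ℝ (Fin n) → ℝ)
    (hFμ : ∀ x, Fμ x =
      f x + (g (P (x - μ • gradient f x)) +
        1 / (2 * μ) * ‖P (x - μ • gradient f x) - (x - μ • gradient f x)‖ ^ 2) -
        μ / 2 * ‖gradient f x‖ ^ 2)
    (hFstar : IsGLB (Set.range Fμ) Fstar)
    -- the proximal PL inequality
    (hPL : ∀ x : EuclideanSpace ℝ (Fin n),
      ‖(1 / μ) • (x - P (x - μ • gradient f x))‖ ^ 2 ≥ γ * (Fμ x - Fstar))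
    -- a solution of the proximal gradient flow
    (x : ℝ → EuclideanSpace ℝ (Fin n)) (hx : Differentiable ℝ x)
    (hode : ∀ t : ℝ, 0 ≤ t →
      deriv x t = -(μ • ((1 / μ) • (x t - P (x t - μ • gradient f (x t)))))) :
    ∀ t : ℝ, 0 ≤ t →
      deriv (fun s => Fμ (x s)) t ≤ -(γ * μ * (1 - μ * L)) * (Fμ (x t) - Fstar) :=
  stmt17_general n f g L μ γ Fstar hμ hμL hf hhess hg P hP Fμ hFμ hPL x hx hode
end
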